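/- arXiv:1510.00481 — 3 statements merged into one kernel-verified Lean document; each statement's English description precedes it below -/
import Mathlib

section
/- For every positive integer n, one has (∑_{d ∣ n} ψ(d)) · φ(n)² ≤ n³, where φ is Euler's totient function. -/
open scoped BigOperators

/-- The Dedekind psi function: `ψ(n) = n · ∏_{p prime, p ∣ n} (1 + 1/p)`. -/
noncomputable def dedekindPsi (n : ℕ) : ℝ :=
  n * ∏ p ∈ n.primeFactors, (1 + 1 / (p : ℝ))

/-!
Writing `φ(n) = n ∏_{p ∣ n} (1 - 1/p)`, each term of the sum satisfies
`ψ(d) φ(n)² ≤ ψ(d) φ(d) · (n/d) φ(n) ≤ d · n φ(n)`, because `φ(n)/n ≤ φ(d)/d` for `d ∣ n` and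
`ψ(d) φ(d) = d² ∏_{p ∣ d} (1 - 1/p²) ≤ d²`. Summing over `d ∣ n` leaves `σ(n) φ(n) ≤ n²`, which
follows from the same monotonicity of `φ(m)/m` and `∑_{d ∣ n} φ(d) = n`.
-/

open Finset

namespace Nat

lemma one_div_le_one_of_mem_primeFactors {n p : ℕ} (hp : p ∈ n.primeFactors) :
    1 / (p : ℝ) ≤ 1 :=
  div_le_one_of_le₀ (by exact_mod_cast (prime_of_mem_primeFactors hp).one_le) (by positivity)

lemma totient_eq_mul_prod_one_sub_one_div (n : ℕ) :
    (φ n : ℝ) = n * ∏ p ∈ n.primeFactors, (1 - 1 / (p : ℝ)) := by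
  have h := congrArg (Rat.cast : ℚ → ℝ) (totient_eq_mul_prod_factors n)
  push_cast at h
  simpa only [one_div] using h

lemma totient_mul_le_totient_mul_of_dvd {d n : ℕ} (hd : d ∣ n) : φ n * d ≤ φ d * n := by
  rcases eq_or_ne n 0 with rfl | hn
  · simp
  have hprod : ∏ p ∈ n.primeFactors, (1 - 1 / (p : ℝ)) ≤ ∏ p ∈ d.primeFactors, (1 - 1 / (p : ℝ)) :=
    prod_le_prod_of_subset_of_le_one (primeFactors_mono hd hn)
      (fun p hp ↦ sub_nonneg.2 (one_div_le_one_of_mem_primeFactors hp))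
      (fun p _ _ ↦ by simp only [sub_le_self_iff]; positivity)
  have : (φ n * d : ℝ) ≤ φ d * n := by
    rw [totient_eq_mul_prod_one_sub_one_div, totient_eq_mul_prod_one_sub_one_div]
    calc (n * ∏ p ∈ n.primeFactors, (1 - 1 / (p : ℝ))) * d
        = (n * d) * ∏ p ∈ n.primeFactors, (1 - 1 / (p : ℝ)) := by ring
      _ ≤ (n * d) * ∏ p ∈ d.primeFactors, (1 - 1 / (p : ℝ)) := by gcongr
      _ = (d * ∏ p ∈ d.primeFactors, (1 - 1 / (p : ℝ))) * n := by ring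
  exact_mod_cast this

theorem sum_divisors_mul_totient_le_sq (n : ℕ) : (∑ d ∈ n.divisors, d) * φ n ≤ n ^ 2 :=
  calc (∑ d ∈ n.divisors, d) * φ n
      = ∑ d ∈ n.divisors, φ n * (n / d) := by
        rw [sum_mul, ← sum_div_divisors]; simp only [mul_comm]
    _ ≤ ∑ d ∈ n.divisors, φ (n / d) * n := sum_le_sum fun d hd ↦
        totient_mul_le_totient_mul_of_dvd (div_dvd_of_dvd (dvd_of_mem_divisors hd))
    _ = n ^ 2 := by rw [← sum_mul, sum_div_divisors, sum_totient, sq]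

end Nat

lemma dedekindPsi_nonneg (n : ℕ) : 0 ≤ dedekindPsi n := by
  unfold dedekindPsi; positivity

lemma dedekindPsi_mul_totient_le_sq (n : ℕ) : dedekindPsi n * n.totient ≤ (n : ℝ) ^ 2 := by
  rw [dedekindPsi, Nat.totient_eq_mul_prod_one_sub_one_div]
  have hprod : ∏ p ∈ n.primeFactors, ((1 + 1 / (p : ℝ)) * (1 - 1 / p)) ≤ 1 :=
    prod_le_one
      (fun p hp ↦ mul_nonneg (by positivity)
        (sub_nonneg.2 (Nat.one_div_le_one_of_mem_primeFactors hp)))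
      (fun p _ ↦ by nlinarith [sq_nonneg (1 / (p : ℝ))])
  calc (n * ∏ p ∈ n.primeFactors, (1 + 1 / (p : ℝ))) * (n * ∏ p ∈ n.primeFactors, (1 - 1 / (p : ℝ)))
      = (n : ℝ) ^ 2 * ∏ p ∈ n.primeFactors, ((1 + 1 / (p : ℝ)) * (1 - 1 / p)) := by
        rw [prod_mul_distrib]; ring
    _ ≤ (n : ℝ) ^ 2 := mul_le_of_le_one_right (by positivity) hprod

lemma dedekindPsi_mul_totient_sq_le_of_mem_divisors {d n : ℕ} (hdn : d ∈ n.divisors) :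
    dedekindPsi d * (n.totient : ℝ) ^ 2 ≤ d * (n * n.totient) := by
  obtain ⟨hd, hn⟩ := Nat.mem_divisors.1 hdn
  have hd0 : (0 : ℝ) < d := by exact_mod_cast Nat.pos_of_dvd_of_pos hd (Nat.pos_of_ne_zero hn)
  have htot : (n.totient * d : ℝ) ≤ d.totient * n := by
    exact_mod_cast Nat.totient_mul_le_totient_mul_of_dvd hd
  refine le_of_mul_le_mul_left ?_ hd0
  calc (d : ℝ) * (dedekindPsi d * (n.totient : ℝ) ^ 2)
      = dedekindPsi d * n.totient * (n.totient * d) := by ring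
    _ ≤ dedekindPsi d * n.totient * (d.totient * n) := by
        gcongr; exact mul_nonneg (dedekindPsi_nonneg d) (Nat.cast_nonneg _)
    _ = dedekindPsi d * d.totient * (n * n.totient) := by ring
    _ ≤ (d : ℝ) ^ 2 * (n * n.totient) := by gcongr; exact dedekindPsi_mul_totient_le_sq d
    _ = d * (d * (n * n.totient)) := by ring

theorem sum_psi_divisors_mul_totient_sq_le_general (n : ℕ) :
    (∑ d ∈ n.divisors, dedekindPsi d) * (n.totient : ℝ) ^ 2 ≤ (n : ℝ) ^ 3 := by
  have hsigma : ((∑ d ∈ n.divisors, d : ℕ) : ℝ) * n.totient ≤ (n : ℝ) ^ 2 := by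
    exact_mod_cast Nat.sum_divisors_mul_totient_le_sq n
  calc (∑ d ∈ n.divisors, dedekindPsi d) * (n.totient : ℝ) ^ 2
      ≤ ∑ d ∈ n.divisors, (d : ℝ) * (n * n.totient) := by
        rw [sum_mul]
        exact sum_le_sum fun d hd ↦ dedekindPsi_mul_totient_sq_le_of_mem_divisors hd
    _ = (∑ d ∈ n.divisors, (d : ℝ)) * (n * n.totient) := (sum_mul ..).symm
    _ = ((∑ d ∈ n.divisors, d : ℕ) : ℝ) * n.totient * n := by push_cast; ring
    _ ≤ (n : ℝ) ^ 2 * n := by gcongr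
    _ = (n : ℝ) ^ 3 := by ring

theorem sum_psi_divisors_mul_totient_sq_le (n : ℕ) (hn : 0 < n) :
    (∑ d ∈ n.divisors, dedekindPsi d) * (n.totient : ℝ) ^ 2 ≤ (n : ℝ) ^ 3 :=
  sum_psi_divisors_mul_totient_sq_le_general n
end

section
/- There is a constant K such that for every real number x ≥ 2, |∑_{n ≤ x} ψ(n) − (15/(2π²)) · x²| ≤ K · x · log x, where the sum is over positive integers n ≤ x and log denotes the natural logarithm. -/
/-!
Since `ψ = μ² ∗ id`, we have `∑_{n ≤ x} ψ(n) = ∑_{d ≤ x} μ²(d) ∑_{m ≤ x/d} m`. Replacing the inner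
sum by `(x/d)²/2` costs at most `x/d` for each `d`, hence `O(x log x)` in total, and completing
`∑_{d ≤ x} μ²(d)/d²` to the full series costs `x² · O(1/x)`. The constant comes from the Euler
product `∑ μ²(n)/n² = ∏_p (1 + p⁻²) = ζ(2)/ζ(4) = 15/π²`.
-/

open scoped BigOperators

open Finset ArithmeticFunction Real
open scoped ArithmeticFunction.Moebius

noncomputable def natInvPowHom {k : ℕ} (hk : k ≠ 0) : ℕ →*₀ ℝ :=
  (powMonoidWithZeroHom hk).comp
    (invMonoidWithZeroHom.comp (Nat.castRingHom ℝ).toMonoidWithZeroHom)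

lemma natInvPowHom_apply {k : ℕ} (hk : k ≠ 0) (n : ℕ) :
    natInvPowHom hk n = ((n : ℝ) ^ k)⁻¹ := by
  simp only [natInvPowHom, MonoidWithZeroHom.comp_apply, ← inv_pow]
  rfl

lemma hasProd_one_sub_inv_pow_inv {k : ℕ} (hk : 1 < k) :
    HasProd (fun p : Nat.Primes ↦ (1 - ((p : ℝ) ^ k)⁻¹)⁻¹) (∑' n : ℕ, ((n : ℝ) ^ k)⁻¹) := by
  have hsum : Summable fun n : ℕ ↦ ‖natInvPowHom (by omega : k ≠ 0) n‖ := by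
    simpa [natInvPowHom_apply] using Real.summable_nat_pow_inv.mpr hk
  simpa [natInvPowHom_apply] using
    EulerProduct.eulerProduct_completely_multiplicative_hasProd hsum

lemma moebius_sq_le_one (n : ℕ) : (μ n : ℝ) ^ 2 ≤ 1 :=
  (sq_le_one_iff_abs_le_one _).mpr (by exact_mod_cast abs_moebius_le_one)

lemma moebius_sq_div_pow_le (n k : ℕ) : (μ n : ℝ) ^ 2 / (n : ℝ) ^ k ≤ ((n : ℝ) ^ k)⁻¹ := by
  rw [div_eq_mul_inv]
  exact mul_le_of_le_one_left (by positivity) (moebius_sq_le_one n)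

lemma summable_norm_moebius_sq_div_pow {k : ℕ} (hk : 1 < k) :
    Summable fun n : ℕ ↦ ‖(μ n : ℝ) ^ 2 / (n : ℝ) ^ k‖ := by
  refine (Real.summable_nat_pow_inv.mpr hk).of_nonneg_of_le (fun n ↦ norm_nonneg _) fun n ↦ ?_
  rw [Real.norm_of_nonneg (by positivity)]
  exact moebius_sq_div_pow_le n k

lemma tsum_moebius_sq_div_pow_prime_pow {p : ℕ} (hp : p.Prime) (k : ℕ) :
    ∑' e : ℕ, (μ (p ^ e) : ℝ) ^ 2 / ((p : ℝ) ^ e) ^ k = 1 + ((p : ℝ) ^ k)⁻¹ := by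
  rw [tsum_eq_sum (s := range 2) fun e he ↦ ?_]
  · simp [sum_range_succ, moebius_apply_prime hp, div_eq_mul_inv]
  · rw [moebius_apply_prime_pow hp (by simp at he; omega), if_neg (by simp at he; omega)]
    simp

lemma hasProd_one_add_inv_pow {k : ℕ} (hk : 1 < k) :
    HasProd (fun p : Nat.Primes ↦ 1 + ((p : ℝ) ^ k)⁻¹)
      (∑' n : ℕ, (μ n : ℝ) ^ 2 / (n : ℝ) ^ k) := by
  have hmul {m n : ℕ} (hmn : m.Coprime n) :
      (μ (m * n) : ℝ) ^ 2 / ((m * n : ℕ) : ℝ) ^ k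
        = (μ m : ℝ) ^ 2 / (m : ℝ) ^ k * ((μ n : ℝ) ^ 2 / (n : ℝ) ^ k) := by
    rw [isMultiplicative_moebius.map_mul_of_coprime hmn]
    push_cast
    ring
  have hfactor (p : Nat.Primes) := tsum_moebius_sq_div_pow_prime_pow p.2 k
  simpa [hfactor] using EulerProduct.eulerProduct_hasProd (by simp) hmul
    (summable_norm_moebius_sq_div_pow hk) (by simp)

theorem tsum_moebius_sq_div_pow_mul_tsum_inv_pow_two_mul {k : ℕ} (hk : 1 < k) :
    (∑' n : ℕ, (μ n : ℝ) ^ 2 / (n : ℝ) ^ k) * ∑' n : ℕ, ((n : ℝ) ^ (2 * k))⁻¹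
      = ∑' n : ℕ, ((n : ℝ) ^ k)⁻¹ := by
  refine ((hasProd_one_add_inv_pow hk).mul (hasProd_one_sub_inv_pow_inv (by omega))).unique ?_
  -- Euler factors: `(1 + q⁻¹) (1 - q⁻²)⁻¹ = (1 - q⁻¹)⁻¹` for `q = p ^ k`
  convert hasProd_one_sub_inv_pow_inv hk using 2 with p
  have hq : (1 : ℝ) < (p : ℝ) ^ k := one_lt_pow₀ (by exact_mod_cast p.prop.one_lt) (by omega)
  have h1 : (p : ℝ) ^ k - 1 ≠ 0 := by linarith
  have h2 : ((p : ℝ) ^ k) ^ 2 - 1 ≠ 0 := by nlinarith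
  rw [pow_mul']
  field_simp
  ring

theorem hasSum_moebius_sq_div_sq :
    HasSum (fun n : ℕ ↦ (μ n : ℝ) ^ 2 / (n : ℝ) ^ 2) (15 / π ^ 2) := by
  have h := tsum_moebius_sq_div_pow_mul_tsum_inv_pow_two_mul one_lt_two
  simp only [Nat.reduceMul, ← one_div, hasSum_zeta_two.tsum_eq, hasSum_zeta_four.tsum_eq] at h
  have hπ : π ^ 2 ≠ 0 := by positivity
  have hT : ∑' n : ℕ, (μ n : ℝ) ^ 2 / (n : ℝ) ^ 2 = 15 / π ^ 2 := by
    rw [eq_div_iff hπ]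
    refine mul_right_cancel₀ hπ ?_
    linear_combination 90 * h
  exact hT ▸ (summable_norm_moebius_sq_div_pow one_lt_two).of_norm.hasSum

lemma prod_primeFactors_one_add_one_div {n : ℕ} (hn : n ≠ 0) :
    ∏ p ∈ n.primeFactors, (1 + 1 / (p : ℝ)) = ∑ d ∈ n.divisors, (μ d : ℝ) ^ 2 / d := by
  have hsq (d : ℕ) : (μ d : ℝ) ^ 2 = if Squarefree d then 1 else 0 := by
    exact_mod_cast moebius_sq
  simp only [hsq, ite_div, one_div, zero_div, ← sum_filter, Nat.sum_divisors_filter_squarefree hn,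
    Nat.factors_eq, prod_one_add]
  refine sum_congr rfl fun t _ ↦ ?_
  simp [Finset.prod_val]

lemma dedekindPsi_eq_moebius_sq_mul_id (n : ℕ) :
    dedekindPsi n = ((μ : ArithmeticFunction ℝ).ppow 2 * ↑ArithmeticFunction.id) n := by
  rcases eq_or_ne n 0 with rfl | hn
  · simp [dedekindPsi]
  simp only [mul_apply, ppow_apply two_pos, intCoe_apply, natCoe_apply, id_apply]
  rw [Nat.sum_divisorsAntidiagonal (fun a b ↦ (μ a : ℝ) ^ 2 * (b : ℝ)), dedekindPsi,
    prod_primeFactors_one_add_one_div hn, mul_sum]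
  refine sum_congr rfl fun d hd ↦ ?_
  have hd0 : (d : ℝ) ≠ 0 := by exact_mod_cast (Nat.pos_of_mem_divisors hd).ne'
  rw [Nat.cast_div (Nat.dvd_of_mem_divisors hd) hd0]
  ring

lemma sum_Ioc_dedekindPsi (N : ℕ) :
    ∑ n ∈ Ioc 0 N, dedekindPsi n
      = ∑ d ∈ Ioc 0 N, (μ d : ℝ) ^ 2 * ∑ m ∈ Ioc 0 (N / d), (m : ℝ) := by
  simp only [dedekindPsi_eq_moebius_sq_mul_id, sum_Ioc_mul_eq_sum_sum, ppow_apply two_pos,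
    intCoe_apply, natCoe_apply, id_apply]

lemma sum_Ioc_dedekindPsi_sub_eq (x : ℝ) :
    ∑ n ∈ Ioc 0 ⌊x⌋₊, dedekindPsi n - 15 / (2 * π ^ 2) * x ^ 2
      = ∑ d ∈ Ioc 0 ⌊x⌋₊, (μ d : ℝ) ^ 2 * (∑ m ∈ Ioc 0 ⌊x / d⌋₊, (m : ℝ) - (x / d) ^ 2 / 2)
        - x ^ 2 / 2 * (15 / π ^ 2 - ∑ d ∈ Ioc 0 ⌊x⌋₊, (μ d : ℝ) ^ 2 / (d : ℝ) ^ 2) := by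
  simp only [sum_Ioc_dedekindPsi, Nat.floor_div_natCast, mul_sub, sum_sub_distrib, mul_sum]
  ring_nf

lemma sum_Ioc_zero_natCast (k : ℕ) : ∑ m ∈ Ioc 0 k, (m : ℝ) = k * (k + 1) / 2 := by
  induction k with
  | zero => simp
  | succ k ih =>
    rw [sum_Ioc_succ_top k.zero_le, ih]
    push_cast
    ring

lemma abs_sum_Ioc_floor_sub_sq_div_two_le {y : ℝ} (hy : 0 ≤ y) :
    |∑ m ∈ Ioc 0 ⌊y⌋₊, (m : ℝ) - y ^ 2 / 2| ≤ y := by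
  have hle : (⌊y⌋₊ : ℝ) ≤ y := Nat.floor_le hy
  have hlt : y < ⌊y⌋₊ + 1 := Nat.lt_floor_add_one y
  rw [sum_Ioc_zero_natCast, abs_le]
  constructor <;> nlinarith

lemma abs_sum_moebius_sq_mul_sum_Ioc_floor_sub_le {x : ℝ} (hx : 1 ≤ x) :
    |∑ d ∈ Ioc 0 ⌊x⌋₊, (μ d : ℝ) ^ 2 * (∑ m ∈ Ioc 0 ⌊x / d⌋₊, (m : ℝ) - (x / d) ^ 2 / 2)|
      ≤ x * (1 + log x) := by
  calc _ ≤ ∑ d ∈ Ioc 0 ⌊x⌋₊, x * (d : ℝ)⁻¹ := by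
        refine (abs_sum_le_sum_abs _ _).trans (sum_le_sum fun d _ ↦ ?_)
        rw [abs_mul, abs_of_nonneg (sq_nonneg _), ← div_eq_mul_inv]
        exact (mul_le_of_le_one_left (abs_nonneg _) (moebius_sq_le_one d)).trans
          (abs_sum_Ioc_floor_sub_sq_div_two_le (by positivity))
    _ = x * harmonic ⌊x⌋₊ := by
        rw [← mul_sum, harmonic_eq_sum_Icc]
        push_cast
        rfl
    _ ≤ x * (1 + log x) := by
        gcongr
        refine (harmonic_le_one_add_log _).trans ?_
        gcongr
        · exact_mod_cast Nat.floor_pos.mpr hx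
        · exact Nat.floor_le (by positivity)

lemma tsum_sub_sum_Ioc_mem_Icc {f : ℕ → ℝ} (hf0 : ∀ n, 0 ≤ f n)
    (hf : ∀ n, f n ≤ ((n : ℝ) ^ 2)⁻¹) (N : ℕ) :
    ∑' n, f n - ∑ n ∈ Ioc 0 N, f n ∈ Set.Icc (0 : ℝ) (2 / (N + 1)) := by
  have hsum : Summable f := (Real.summable_nat_pow_inv.mpr one_lt_two).of_nonneg_of_le hf0 hf
  -- `hf 0` says `f 0 ≤ (0 ^ 2)⁻¹ = 0`
  have hzero : f 0 = 0 := le_antisymm (by simpa using hf 0) (hf0 0)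
  have htail : ∑' n, f n - ∑ n ∈ Ioc 0 N, f n = ∑' i, f (i + (N + 1)) := by
    rw [← hsum.sum_add_tsum_nat_add (N + 1), range_eq_Ico, sum_eq_sum_Ico_succ_bot N.succ_pos,
      hzero, zero_add, show Ico 1 N.succ = Ioc 0 N from rfl, add_sub_cancel_left]
  rw [htail]
  refine ⟨tsum_nonneg fun i ↦ hf0 _, Real.tsum_le_of_sum_range_le (fun i ↦ hf0 _) fun M ↦ ?_⟩
  calc ∑ i ∈ range M, f (i + (N + 1))
      ≤ ∑ i ∈ range M, (((N + 1 + i : ℕ) : ℝ) ^ 2)⁻¹ :=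
        sum_le_sum fun i _ ↦ by rw [add_comm]; exact hf _
    _ = ∑ n ∈ Ioo N (N + 1 + M), ((n : ℝ) ^ 2)⁻¹ := by
        rw [← Ico_add_one_left_eq_Ioo, sum_Ico_eq_sum_range, Nat.add_sub_cancel_left]
    _ ≤ 2 / (N + 1) := sum_Ioo_inv_sq_le N _

lemma abs_sq_mul_tail_le {x : ℝ} (hx : 0 ≤ x) :
    |x ^ 2 / 2 * (15 / π ^ 2 - ∑ d ∈ Ioc 0 ⌊x⌋₊, (μ d : ℝ) ^ 2 / (d : ℝ) ^ 2)| ≤ x := by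
  obtain ⟨h0, h1⟩ := hasSum_moebius_sq_div_sq.tsum_eq ▸
    tsum_sub_sum_Ioc_mem_Icc (fun n ↦ by positivity) (moebius_sq_div_pow_le · 2) ⌊x⌋₊
  have hlt : x < ⌊x⌋₊ + 1 := Nat.lt_floor_add_one x
  rw [abs_of_nonneg (by positivity)]
  calc _ ≤ x ^ 2 / 2 * (2 / (⌊x⌋₊ + 1)) := by gcongr
    _ = x * (x / (⌊x⌋₊ + 1)) := by ring
    _ ≤ x := mul_le_of_le_one_right hx ((div_le_one (by positivity)).mpr hlt.le)

theorem sum_psi_asymptotic :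
    ∃ K : ℝ, ∀ x : ℝ, 2 ≤ x →
      |(∑ n ∈ Finset.Icc 1 ⌊x⌋₊, dedekindPsi n) - (15 / (2 * Real.pi ^ 2)) * x ^ 2|
        ≤ K * x * Real.log x := by
  refine ⟨5, fun x hx ↦ ?_⟩
  have hlog : 1 / 2 < log x := by
    linarith [log_two_gt_d9, log_le_log two_pos hx]
  rw [show Icc 1 ⌊x⌋₊ = Ioc 0 ⌊x⌋₊ from rfl, sum_Ioc_dedekindPsi_sub_eq]
  calc _ ≤ x * (1 + log x) + x := (abs_sub _ _).trans (add_le_add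
        (abs_sum_moebius_sq_mul_sum_Ioc_floor_sub_le (by linarith)) (abs_sq_mul_tail_le (by linarith)))
    _ ≤ 5 * x * log x := by nlinarith
end

section
/- For positive integers q and n, let B_q(n) denote the number of integers a with 1 ≤ a ≤ n² and a² ≡ 4q (mod n²). There is a constant K such that for every positive integer q and every real number x ≥ 2, ∑_{d ≤ x, gcd(d,q) = 1} (ψ(d)/d) · B_q(d) ≤ K · x · log x, where the sum is over positive integers d ≤ x coprime to q and log denotes the natural logarithm. -/
open scoped BigOperators

/-- `B_q(n)` is the number of integers `a` with `1 ≤ a ≤ n²` and `a² ≡ 4q (mod n²)`. -/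
def Bfun (q n : ℕ) : ℕ :=
  ((Finset.Icc 1 (n ^ 2)).filter (fun a => a ^ 2 % n ^ 2 = (4 * q) % n ^ 2)).card

/-!
Bound each term, then drop the coprimality condition. First, `ψ(d)/d = ∑_{e ∣ d squarefree} 1/e`
is at most `∑_{e ∣ d} 1/e`. Second, if `a₀, a` are square roots of `4q` modulo `n²` with
`gcd(n, q) = 1`, then for each `p ∣ n` the `p`-part of `n²` divides `(a - a₀)(a + a₀)`, and the two
factors are not both divisible by a high power of `p`; hence `a ≡ ±a₀` modulo that `p`-part (up
to a factor `4`). Roots with the same sign pattern satisfy `4a ≡ 4b (mod n²)`, so there are at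
most `5` of them per pattern and `B_q(n) ≤ 5 · 2^ω(n) ≤ 5 τ(n)`.
It remains to show `∑_{d ≤ N} τ(d) ∑_{e ∣ d} 1/e ≪ N log N`. Writing `d = em` and using
`τ(em) ≤ τ(e) τ(m)`, the sum is at most `∑_{e ≤ N} τ(e)/e · ∑_{m ≤ N/e} τ(m)
≤ N H_N ∑_e τ(e)/e² ≤ 4 N H_N`.
-/

open Finset ArithmeticFunction
open scoped ArithmeticFunction.sigma

section Prime

variable {α : Type*} [CommMonoidWithZero α] [IsCancelMulZero α]

theorem Prime.pow_dvd_pow_mul_of_not_pow_succ_dvd {p : α} (hp : Prime p) {k : ℕ} :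
    ∀ {s : ℕ} {u w : α}, p ^ k ∣ u * w → ¬ p ^ (s + 1) ∣ u → p ^ k ∣ p ^ s * w
  | 0, _, _, h, hu => by simpa using hp.pow_dvd_of_dvd_mul_left k (by simpa using hu) h
  | s + 1, u, w, h, hu => by
    by_cases hpu : p ∣ u
    · obtain ⟨u, rfl⟩ := hpu
      have := hp.pow_dvd_pow_mul_of_not_pow_succ_dvd (s := s) (u := u) (w := p * w)
        (by rwa [mul_assoc, mul_left_comm] at h)
        fun h' => hu (by rw [pow_succ']; exact mul_dvd_mul_left p h')
      rwa [pow_succ, mul_assoc]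
    · exact (hp.pow_dvd_of_dvd_mul_left k hpu h).trans (dvd_mul_left _ _)

theorem Prime.pow_dvd_mul_or_of_dvd_mul {p m u v : α} (hp : Prime p) {k s : ℕ}
    (hm : p ^ s ∣ m) (h : p ^ k ∣ u * v)
    (huv : ¬ (p ^ (s + 1) ∣ u ∧ p ^ (s + 1) ∣ v)) : p ^ k ∣ m * u ∨ p ^ k ∣ m * v := by
  rcases not_and_or.1 huv with hu | hv
  · exact .inr ((hp.pow_dvd_pow_mul_of_not_pow_succ_dvd h hu).trans (mul_dvd_mul_right hm v))
  · exact .inl ((hp.pow_dvd_pow_mul_of_not_pow_succ_dvd (mul_comm u v ▸ h) hv).trans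
      (mul_dvd_mul_right hm u))

end Prime

theorem prime_pow_dvd_four_mul_sub_or_add {p k q : ℕ} {a b : ℤ} (hp : p.Prime) (hpq : ¬ p ∣ q)
    (ha : (p : ℤ) ^ k ∣ a ^ 2 - 4 * q) (hb : (p : ℤ) ^ k ∣ b ^ 2 - 4 * q) :
    (p : ℤ) ^ k ∣ 4 * (a - b) ∨ (p : ℤ) ^ k ∣ 4 * (a + b) := by
  have hp' : Prime (p : ℤ) := Nat.prime_iff_prime_int.mp hp
  have hprod : (p : ℤ) ^ k ∣ (a - b) * (a + b) := (dvd_sub ha hb).trans (dvd_of_eq (by ring))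
  have hpq' : ¬ (p : ℤ) ∣ q := by exact_mod_cast hpq
  obtain rfl | hp2 := eq_or_ne p 2
  · rcases le_or_gt k 2 with hk | hk
    · exact .inl ((pow_dvd_pow _ hk).trans (by norm_num))
    · refine Prime.pow_dvd_mul_or_of_dvd_mul hp' (s := 2) (by norm_num) hprod ?_
      rintro ⟨h₁, h₂⟩
      have h₈ : (8 : ℤ) ∣ a ^ 2 - 4 * q :=
        (pow_dvd_pow (2 : ℤ) hk).trans (by exact_mod_cast ha)
      obtain ⟨c, rfl⟩ : (4 : ℤ) ∣ a := by push_cast at h₁ h₂; omega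
      have h16 : (16 : ℤ) ∣ (4 * c) ^ 2 := ⟨c ^ 2, by ring⟩
      exact hpq' (by omega)
  · rcases k.eq_zero_or_pos with rfl | hk
    · simp
    refine Prime.pow_dvd_mul_or_of_dvd_mul hp' (s := 0) (one_dvd _) hprod ?_
    rintro ⟨h₁, h₂⟩
    have hp2' : ¬ (p : ℤ) ∣ 2 := by
      exact_mod_cast fun h => hp2 ((Nat.prime_dvd_prime_iff_eq hp Nat.prime_two).1 h)
    have hpa : (p : ℤ) ∣ a := by
      have : (p : ℤ) ∣ 2 * a :=
        (dvd_add (by simpa using h₁) (by simpa using h₂)).trans (dvd_of_eq (by ring))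
      exact (hp'.dvd_mul.1 this).resolve_left hp2'
    have h4q : (p : ℤ) ∣ 2 * (2 * q) :=
      (dvd_sub (dvd_pow hpa two_ne_zero) ((dvd_pow_self _ hk.ne').trans ha)).trans
        (dvd_of_eq (by ring))
    exact hpq' ((hp'.dvd_mul.1 ((hp'.dvd_mul.1 h4q).resolve_left hp2')).resolve_left hp2')

theorem Int.natCast_dvd_of_forall_pow_factorization_dvd {m : ℕ} (hm : m ≠ 0) {c : ℤ}
    (h : ∀ p ∈ m.primeFactors, (p : ℤ) ^ m.factorization p ∣ c) : (m : ℤ) ∣ c := by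
  rcases eq_or_ne c 0 with rfl | hc
  · exact dvd_zero _
  rw [Int.natCast_dvd]
  refine (Nat.factorization_prime_le_iff_dvd hm (Int.natAbs_ne_zero.2 hc)).1 fun p hp => ?_
  by_cases hpm : p ∈ m.primeFactors
  · rw [← hp.pow_dvd_iff_le_factorization (Int.natAbs_ne_zero.2 hc), ← Int.natCast_dvd]
    exact_mod_cast h p hpm
  · simp [Finsupp.notMem_support_iff.1 (Nat.support_factorization m ▸ hpm)]

theorem card_le_succ_of_forall_mul_modEq {M m : ℕ} {s : Finset ℕ} (hm : 0 < m)
    (hs : ∀ a ∈ s, a ≤ M) (h : ∀ a ∈ s, ∀ b ∈ s, m * a ≡ m * b [MOD M]) : #s ≤ m + 1 := by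
  calc #s ≤ #(range (m + 1)) := by
        refine card_le_card_of_injOn (fun a => m * a / M) (fun a ha => ?_)
          fun a ha b hb hab => ?_
        · exact mem_range.2 (Nat.lt_succ_of_le (Nat.div_le_of_le_mul
            (by rw [mul_comm M]; exact Nat.mul_le_mul_left m (hs a ha))))
        · refine Nat.eq_of_mul_eq_mul_left hm ?_
          rw [← Nat.div_add_mod (m * a) M, ← Nat.div_add_mod (m * b) M]
          simp only at hab
          rw [hab, h a ha b hb]
    _ = m + 1 := card_range _

theorem two_pow_card_primeFactors_le_card_divisors {n : ℕ} (hn : n ≠ 0) :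
    2 ^ #n.primeFactors ≤ #n.divisors := by
  rw [Nat.card_divisors hn]
  refine pow_card_le_prod _ _ _ fun p hp => ?_
  have := Finsupp.mem_support_iff.1 (Nat.support_factorization n ▸ hp)
  omega

/-- Records, for each `p ∣ n`, whether `a ≡ a₀` or `a ≡ -a₀` modulo the `p`-part of `n²`; the
factor `4` absorbs the extra square roots modulo powers of `2`. -/
def sqrtSignPattern (n a₀ a : ℕ) : Finset ℕ :=
  n.primeFactors.filter fun p => (p : ℤ) ^ (n ^ 2).factorization p ∣ 4 * ((a : ℤ) - a₀)

theorem four_mul_modEq_of_sqrtSignPattern_eq {q n a₀ a b : ℕ} (hn : n ≠ 0) (hco : n.Coprime q)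
    (h₀ : a₀ ^ 2 ≡ 4 * q [MOD n ^ 2]) (ha : a ^ 2 ≡ 4 * q [MOD n ^ 2])
    (hb : b ^ 2 ≡ 4 * q [MOD n ^ 2]) (hab : sqrtSignPattern n a₀ a = sqrtSignPattern n a₀ b) :
    4 * a ≡ 4 * b [MOD n ^ 2] := by
  have hroot {c : ℕ} (hc : c ^ 2 ≡ 4 * q [MOD n ^ 2]) (p : ℕ) :
      (p : ℤ) ^ (n ^ 2).factorization p ∣ (c : ℤ) ^ 2 - 4 * q := by
    exact_mod_cast (Int.natCast_dvd_natCast.2 (Nat.ordProj_dvd (n ^ 2) p)).trans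
      (Nat.modEq_iff_dvd.1 hc.symm)
  rw [Nat.modEq_iff_dvd]
  push_cast
  refine Int.natCast_dvd_of_forall_pow_factorization_dvd (by positivity) fun p hp => ?_
  rw [Nat.primeFactors_pow n two_ne_zero] at hp
  have hpq : ¬ p ∣ q := (Nat.prime_of_mem_primeFactors hp).coprime_iff_not_dvd.1
    (hco.coprime_dvd_left (Nat.dvd_of_mem_primeFactors hp))
  by_cases hpa : p ∈ sqrtSignPattern n a₀ a
  · have hpb : p ∈ sqrtSignPattern n a₀ b := hab ▸ hpa
    exact (dvd_sub (mem_filter.1 hpb).2 (mem_filter.1 hpa).2).trans (dvd_of_eq (by ring))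
  · have hplus {c : ℕ} (hc : c ^ 2 ≡ 4 * q [MOD n ^ 2]) (hpc : p ∉ sqrtSignPattern n a₀ c) :
        (p : ℤ) ^ (n ^ 2).factorization p ∣ 4 * ((c : ℤ) + a₀) :=
      (prime_pow_dvd_four_mul_sub_or_add (Nat.prime_of_mem_primeFactors hp) hpq (hroot hc p)
        (hroot h₀ p)).resolve_left fun h => hpc (mem_filter.2 ⟨hp, h⟩)
    exact (dvd_sub (hplus hb (hab ▸ hpa)) (hplus ha hpa)).trans (dvd_of_eq (by ring))

theorem Bfun_le_five_mul_card_divisors {q n : ℕ} (hn : n ≠ 0) (hco : n.Coprime q) :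
    Bfun q n ≤ 5 * #n.divisors := by
  set S := (Icc 1 (n ^ 2)).filter fun a => a ^ 2 ≡ 4 * q [MOD n ^ 2]
  obtain hS | ⟨a₀, ha₀⟩ := S.eq_empty_or_nonempty
  · show #S ≤ _
    simp [hS]
  have hfiber : ∀ t ∈ S.image (sqrtSignPattern n a₀),
      #{a ∈ S | sqrtSignPattern n a₀ a = t} ≤ 5 := by
    intro t _
    refine card_le_succ_of_forall_mul_modEq (M := n ^ 2) (by norm_num) (fun a ha => ?_)
      fun a ha b hb => ?_
    · exact (mem_Icc.1 (mem_filter.1 (mem_filter.1 ha).1).1).2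
    · simp only [S, mem_filter] at ha hb ha₀
      exact four_mul_modEq_of_sqrtSignPattern_eq hn hco ha₀.2 ha.1.2 hb.1.2 (ha.2.trans hb.2.symm)
  have himage : #(S.image (sqrtSignPattern n a₀)) ≤ 2 ^ #n.primeFactors := by
    rw [← card_powerset]
    exact card_le_card (image_subset_iff.2 fun a _ => mem_powerset.2 (filter_subset _ _))
  calc Bfun q n = #S := rfl
    _ ≤ 5 * #(S.image (sqrtSignPattern n a₀)) := card_le_mul_card_image S 5 hfiber
    _ ≤ 5 * #n.divisors := by
      grw [himage, two_pow_card_primeFactors_le_card_divisors hn]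

theorem dedekindPsi_div_le_sum_inv_divisors {d : ℕ} (hd : d ≠ 0) :
    dedekindPsi d / d ≤ ∑ e ∈ d.divisors, (e : ℝ)⁻¹ := by
  have hprime {t : Finset ℕ} (ht : t ∈ d.primeFactors.powerset) : ∀ p ∈ t, p.Prime :=
    fun p hp => Nat.prime_of_mem_primeFactors (mem_powerset.1 ht hp)
  calc dedekindPsi d / d = ∏ p ∈ d.primeFactors, (1 + 1 / (p : ℝ)) := by
        rw [dedekindPsi, mul_div_cancel_left₀ _ (by exact_mod_cast hd)]
    _ = ∑ t ∈ d.primeFactors.powerset, (((∏ p ∈ t, p : ℕ)) : ℝ)⁻¹ := by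
        simp [prod_one_add]
    _ = ∑ e ∈ d.primeFactors.powerset.image (fun t : Finset ℕ => ∏ p ∈ t, p), (e : ℝ)⁻¹ := by
        refine (sum_image (f := fun e : ℕ => (e : ℝ)⁻¹) fun t ht t' ht' h => ?_).symm
        rw [← Nat.primeFactors_prod (hprime ht), h, Nat.primeFactors_prod (hprime ht')]
    _ ≤ ∑ e ∈ d.divisors, (e : ℝ)⁻¹ := by
        refine sum_le_sum_of_subset_of_nonneg (image_subset_iff.2 fun t ht => ?_)
          fun _ _ _ => by positivity
        exact Nat.mem_divisors.2 ⟨(prod_dvd_prod_of_subset _ _ _ (mem_powerset.1 ht)).trans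
          (Nat.prod_primeFactors_dvd d), hd⟩

theorem harmonic_mono : Monotone harmonic :=
  monotone_nat_of_le_succ fun n => by
    rw [harmonic_succ]
    exact le_add_of_nonneg_right (by positivity)

theorem harmonic_nonneg (n : ℕ) : 0 ≤ harmonic n :=
  harmonic_zero ▸ harmonic_mono n.zero_le

theorem sum_Ioc_card_divisors_le (N : ℕ) :
    ∑ m ∈ Ioc 0 N, (#m.divisors : ℝ) ≤ N * harmonic N := by
  have h := sum_Ioc_sigma0_eq_sum_div N
  simp only [sigma_zero_apply] at h
  calc ∑ m ∈ Ioc 0 N, (#m.divisors : ℝ) = ∑ a ∈ Ioc 0 N, ((N / a : ℕ) : ℝ) := by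
        exact_mod_cast h
    _ ≤ ∑ a ∈ Ioc 0 N, (N : ℝ) * (a : ℝ)⁻¹ :=
        sum_le_sum fun a _ => by rw [← div_eq_mul_inv]; exact Nat.cast_div_le
    _ = N * harmonic N := by
        rw [← mul_sum, harmonic_eq_sum_Icc, ← Icc_add_one_left_eq_Ioc]
        push_cast
        rfl

theorem sum_Ioc_inv_sq_le_two (N : ℕ) : ∑ i ∈ Ioc 0 N, ((i : ℝ) ^ 2)⁻¹ ≤ 2 := by
  simpa [← Ioo_add_one_right_eq_Ioc] using sum_Ioo_inv_sq_le (α := ℝ) 0 (N + 1)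

theorem sum_Ioc_card_divisors_div_sq_le (N : ℕ) :
    ∑ e ∈ Ioc 0 N, (#e.divisors : ℝ) / (e : ℝ) ^ 2 ≤ 4 := by
  let g : ArithmeticFunction ℝ := ⟨fun n => ((n : ℝ) ^ 2)⁻¹, by simp⟩
  have hg (n : ℕ) : g n = ((n : ℝ) ^ 2)⁻¹ := rfl
  have hgg (e : ℕ) : (g * g) e = #e.divisors / (e : ℝ) ^ 2 := by
    rw [mul_apply, Nat.sum_divisorsAntidiagonal fun a b => g a * g b, div_eq_mul_inv,
      ← nsmul_eq_mul, ← sum_const]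
    refine sum_congr rfl fun a ha => ?_
    rw [hg, hg, ← mul_inv, ← mul_pow, ← Nat.cast_mul,
      Nat.mul_div_cancel' (Nat.dvd_of_mem_divisors ha)]
  calc ∑ e ∈ Ioc 0 N, (#e.divisors : ℝ) / (e : ℝ) ^ 2
      = ∑ a ∈ Ioc 0 N, g a * ∑ b ∈ Ioc 0 (N / a), g b := by
        simp only [← hgg, sum_Ioc_mul_eq_sum_sum]
    _ ≤ ∑ a ∈ Ioc 0 N, g a * 2 := by
        gcongr with a
        · rw [hg]; positivity
        · exact sum_Ioc_inv_sq_le_two _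
    _ ≤ 2 * 2 := by
        rw [← sum_mul]
        gcongr
        exact sum_Ioc_inv_sq_le_two N
    _ = 4 := by norm_num

theorem sum_Ioc_sum_inv_divisors_mul_card_divisors_le (N : ℕ) :
    ∑ d ∈ Ioc 0 N, (∑ e ∈ d.divisors, (e : ℝ)⁻¹) * #d.divisors ≤ 4 * N * harmonic N := by
  let f : ArithmeticFunction ℝ := ⟨fun n => #n.divisors / (n : ℝ), by simp⟩
  have hf (n : ℕ) : f n = #n.divisors / (n : ℝ) := rfl
  let τ : ArithmeticFunction ℝ := ↑(σ 0)
  have hτ (m : ℕ) : τ m = #m.divisors := by simp [τ, sigma_zero_apply]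
  have hpoint (d : ℕ) : (∑ e ∈ d.divisors, (e : ℝ)⁻¹) * #d.divisors ≤ (f * τ) d := by
    rw [mul_apply, sum_mul, ← Nat.sum_divisorsAntidiagonal fun e _ => (e : ℝ)⁻¹ * #d.divisors]
    refine sum_le_sum fun x hx => ?_
    rw [hf, hτ, div_mul_eq_mul_div, div_eq_inv_mul, ← (Nat.mem_divisorsAntidiagonal.1 hx).1,
      Nat.divisors_mul]
    gcongr
    exact_mod_cast card_mul_le
  calc ∑ d ∈ Ioc 0 N, (∑ e ∈ d.divisors, (e : ℝ)⁻¹) * #d.divisors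
      ≤ ∑ d ∈ Ioc 0 N, (f * τ) d := sum_le_sum fun d _ => hpoint d
    _ = ∑ e ∈ Ioc 0 N, f e * ∑ m ∈ Ioc 0 (N / e), τ m := sum_Ioc_mul_eq_sum_sum f τ N
    _ ≤ ∑ e ∈ Ioc 0 N, f e * (N / e * harmonic N) := by
        gcongr with e
        · rw [hf]; positivity
        simp only [hτ]
        refine (sum_Ioc_card_divisors_le _).trans ?_
        have := harmonic_nonneg (N / e)
        gcongr
        · exact Nat.cast_div_le
        · exact harmonic_mono (Nat.div_le_self N e)
    _ = N * harmonic N * ∑ e ∈ Ioc 0 N, (#e.divisors : ℝ) / (e : ℝ) ^ 2 := by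
        rw [mul_sum]
        refine sum_congr rfl fun e _ => ?_
        rw [hf]
        ring
    _ ≤ N * harmonic N * 4 := by
        have := harmonic_nonneg N
        gcongr
        exact sum_Ioc_card_divisors_div_sq_le N
    _ = 4 * N * harmonic N := by ring

theorem dedekindPsi_div_mul_Bfun_le {q d : ℕ} (hd : d ≠ 0) (hco : d.Coprime q) :
    dedekindPsi d / d * Bfun q d ≤ 5 * ((∑ e ∈ d.divisors, (e : ℝ)⁻¹) * #d.divisors) := by
  rw [mul_left_comm]
  gcongr
  · exact dedekindPsi_div_le_sum_inv_divisors hd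
  · exact_mod_cast Bfun_le_five_mul_card_divisors hd hco

theorem sum_psi_mul_B_le :
    ∃ K : ℝ, ∀ q : ℕ, 0 < q → ∀ x : ℝ, 2 ≤ x →
      ∑ d ∈ (Finset.Icc 1 ⌊x⌋₊).filter (fun d => Nat.Coprime d q),
        (dedekindPsi d / d) * Bfun q d ≤ K * x * Real.log x := by
  refine ⟨60, fun q _ x hx => ?_⟩
  set N := ⌊x⌋₊
  have hN : (N : ℝ) ≤ x := Nat.floor_le (by linarith)
  have hH : (harmonic N : ℝ) ≤ 1 + Real.log x := harmonic_floor_le_one_add_log x (by linarith)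
  have hlog : 1 ≤ 2 * Real.log x := by
    linarith [Real.log_le_log (by norm_num) hx, Real.log_two_gt_d9]
  calc _ ≤ ∑ d ∈ (Icc 1 N).filter (fun d => d.Coprime q),
          5 * ((∑ e ∈ d.divisors, (e : ℝ)⁻¹) * #d.divisors) := by
        refine sum_le_sum fun d hd => ?_
        obtain ⟨hd, hco⟩ := mem_filter.1 hd
        exact dedekindPsi_div_mul_Bfun_le (by have := (mem_Icc.1 hd).1; omega) hco
    _ ≤ 5 * ∑ d ∈ Ioc 0 N, (∑ e ∈ d.divisors, (e : ℝ)⁻¹) * #d.divisors := by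
        rw [mul_sum, ← Icc_add_one_left_eq_Ioc]
        exact sum_le_sum_of_subset_of_nonneg (filter_subset _ _) fun _ _ _ => by positivity
    _ ≤ 5 * (4 * x * (1 + Real.log x)) := by
        have := harmonic_nonneg N
        grw [sum_Ioc_sum_inv_divisors_mul_card_divisors_le, hN, hH]
    _ ≤ 60 * x * Real.log x := by nlinarith
end
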